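/- The principal ideal generated by h + i and the principal ideal generated by -h + i are both nonzero proper ideals of the bicomplex numbers, and their intersection is {0} while their sum is the whole ring. -/

import Mathlib

open Polynomial

noncomputable section

/-- Segre's bicomplex numbers, modeled as `ℂ[X]/(X² + 1)`. -/
abbrev Bicomplex : Type := AdjoinRoot ((X : ℂ[X]) ^ 2 + 1)

noncomputable def Bicomplex.h : Bicomplex := algebraMap ℂ Bicomplex Complex.I

noncomputable def Bicomplex.i : Bicomplex := AdjoinRoot.root _

lemma aux_aeval : (Polynomial.aeval Complex.I) ((X : ℂ[X]) ^ 2 + 1) = 0 := by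
  simp [Complex.I_sq]

noncomputable def phi : Bicomplex →ₐ[ℂ] ℂ := AdjoinRoot.liftAlgHom _ (Algebra.ofId ℂ ℂ) Complex.I aux_aeval

lemma aux_aeval' : (Polynomial.aeval (-Complex.I)) ((X : ℂ[X]) ^ 2 + 1) = 0 := by
  simp [Complex.I_sq]

noncomputable def phi' : Bicomplex →ₐ[ℂ] ℂ := AdjoinRoot.liftAlgHom _ (Algebra.ofId ℂ ℂ) (-Complex.I) aux_aeval'

lemma hsq : Bicomplex.h ^ 2 = -1 := by
  rw [Bicomplex.h, ← map_pow, Complex.I_sq, map_neg, map_one]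

lemma isq : Bicomplex.i ^ 2 = -1 := by
  have h0 : (AdjoinRoot.mk ((X : ℂ[X]) ^ 2 + 1)) ((X:ℂ[X])^2+1) = 0 := AdjoinRoot.mk_self
  rw [map_add, map_pow, map_one] at h0
  rw [Bicomplex.i, AdjoinRoot.root]
  linear_combination h0

lemma phi_i : phi Bicomplex.i = Complex.I := AdjoinRoot.liftAlgHom_root _ _ _ _
lemma phi_h : phi Bicomplex.h = Complex.I := phi.commutes _
lemma phi'_i : phi' Bicomplex.i = -Complex.I := AdjoinRoot.liftAlgHom_root _ _ _ _
lemma phi'_h : phi' Bicomplex.h = Complex.I := phi'.commutes _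

lemma ne0 : Bicomplex.h + Bicomplex.i ≠ 0 := by
  intro hz
  have := congrArg phi hz
  rw [map_add, phi_i, phi_h, map_zero] at this
  simpa [Complex.I_ne_zero, Complex.ext_iff] using this

lemma ne0' : -Bicomplex.h + Bicomplex.i ≠ 0 := by
  intro hz
  have := congrArg phi' hz
  rw [map_add, map_neg, phi'_i, phi'_h, map_zero] at this
  simpa [Complex.I_ne_zero, Complex.ext_iff] using this

lemma mul0 : (Bicomplex.h + Bicomplex.i) * (-Bicomplex.h + Bicomplex.i) = 0 := by
  linear_combination isq - hsq

lemma k1 : (1 + Bicomplex.h * Bicomplex.i) * (Bicomplex.h + Bicomplex.i) = 0 := by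
  linear_combination Bicomplex.i * hsq + Bicomplex.h * isq

lemma k2 : (1 - Bicomplex.h * Bicomplex.i) * (-Bicomplex.h + Bicomplex.i) = 0 := by
  linear_combination Bicomplex.i * hsq - Bicomplex.h * isq


/-- The two "sets of nullifics": the principal ideals `(h + i)` and `(-h + i)` of the
bicomplex numbers are nonzero proper ideals whose intersection is `{0}` and whose
sum is the whole ring. -/
theorem bicomplex_nullific_ideals :
    Ideal.span {Bicomplex.h + Bicomplex.i} ≠ (⊥ : Ideal Bicomplex) ∧
    Ideal.span {Bicomplex.h + Bicomplex.i} ≠ (⊤ : Ideal Bicomplex) ∧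
    Ideal.span {-Bicomplex.h + Bicomplex.i} ≠ (⊥ : Ideal Bicomplex) ∧
    Ideal.span {-Bicomplex.h + Bicomplex.i} ≠ (⊤ : Ideal Bicomplex) ∧
    Ideal.span {Bicomplex.h + Bicomplex.i} ⊓ Ideal.span {-Bicomplex.h + Bicomplex.i} = ⊥ ∧
    Ideal.span {Bicomplex.h + Bicomplex.i} ⊔ Ideal.span {-Bicomplex.h + Bicomplex.i} = ⊤ := by
  refine ⟨?_, ?_, ?_, ?_, ?_, ?_⟩
  · intro hb; exact ne0 (Ideal.span_singleton_eq_bot.mp hb)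
  · intro ht
    have hu := Ideal.span_singleton_eq_top.mp ht
    have hm := mul0
    exact ne0' (by rwa [hu.mul_right_eq_zero] at hm)
  · intro hb; exact ne0' (Ideal.span_singleton_eq_bot.mp hb)
  · intro ht
    have hu := Ideal.span_singleton_eq_top.mp ht
    have : (-Bicomplex.h + Bicomplex.i) * (Bicomplex.h + Bicomplex.i) = 0 := by
      linear_combination mul0
    exact ne0 (by rwa [hu.mul_right_eq_zero] at this)
  · ext z
    simp only [Ideal.mem_inf, Ideal.mem_span_singleton, Ideal.mem_bot]
    constructor
    · rintro ⟨⟨c, hc⟩, ⟨d, hd⟩⟩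
      have hz1 : (1 + Bicomplex.h * Bicomplex.i) * z = 0 := by
        rw [hc]; linear_combination c * k1
      have hz2 : (1 - Bicomplex.h * Bicomplex.i) * z = 0 := by
        rw [hd]; linear_combination d * k2
      have h2 : (2 : Bicomplex) * z = 0 := by linear_combination hz1 + hz2
      have hs : (2 : ℂ) • z = 0 := by
        rw [Algebra.smul_def, map_ofNat]; exact h2
      rcases smul_eq_zero.mp hs with h | h
      · exact absurd h two_ne_zero
      · exact h
    · rintro rfl; exact ⟨⟨0, (mul_zero _).symm⟩, ⟨0, (mul_zero _).symm⟩⟩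
  · rw [Ideal.eq_top_iff_one]
    set c : Bicomplex := -(algebraMap ℂ Bicomplex 2⁻¹) * Bicomplex.i with hc
    have m2 : (algebraMap ℂ Bicomplex) 2⁻¹ * 2 = 1 := by
      rw [show (2 : Bicomplex) = algebraMap ℂ Bicomplex 2 from (map_ofNat _ 2).symm,
        ← map_mul]
      norm_num
    have key : (Bicomplex.h + Bicomplex.i) * c + (-Bicomplex.h + Bicomplex.i) * c = 1 := by
      rw [hc]; linear_combination (-2 * (algebraMap ℂ Bicomplex 2⁻¹)) * isq + m2
    rw [← key]
    exact Ideal.add_mem _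
      (Ideal.mem_sup_left (Ideal.mem_span_singleton.mpr ⟨c, rfl⟩))
      (Ideal.mem_sup_right (Ideal.mem_span_singleton.mpr ⟨c, rfl⟩))
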